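/- arXiv:2602.07874 — 2 statements merged into one kernel-verified Lean document; each statement's English description precedes it below -/
import Mathlib

section
/- Let $h, \tilde h : S \to \mathbb{R}^n$ be bounded functions on a set $S$ with $\sup_{s} \|h(s) - \tilde h(s)\|_\infty \le 1/2$ (componentwise sup bounded by 1/2). Suppose $\theta_0 \in \mathbb{R}^n$ satisfies $\theta_0^\top h(s) \ge 1$ and $\theta_0^\top \tilde h(s) \ge 1$ for all $s$, and $\|\theta_0\|_1 \le 1$. Let $\theta \in \mathbb{R}^n$ satisfy $\theta^\top \tilde h(s) \ge 0$ for all $s$ and $\|\theta\|_1 \le \beta/2$, and set $a = \|\theta\|_1 \cdot \sup_s \|h(s)-\tilde h(s)\|_\infty$. Then: (i) $(\theta + a\theta_0)^\top h(s) \ge \theta^\top \tilde h(s) \ge 0$ for all $s$, and (ii) $\|\theta + a\theta_0\|_1 \le \beta$. -/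
open Finset

/-- Feasibility transfer under basis approximation (Part 1 of Lemma 3): if
`sup_s ‖h(s) - h̃(s)‖_∞ ≤ 1/2`, `θ₀ᵀh ≥ 1`, `θ₀ᵀh̃ ≥ 1`, `‖θ₀‖₁ ≤ 1`, `θᵀh̃ ≥ 0` and
`‖θ‖₁ ≤ β/2`, then with `a = ‖θ‖₁ · sup_s ‖h(s) - h̃(s)‖_∞` the adjusted point
`θ + aθ₀` satisfies `(θ + aθ₀)ᵀh(s) ≥ θᵀh̃(s) ≥ 0` and `‖θ + aθ₀‖₁ ≤ β`. -/
theorem stmt9 {S : Type*} {n : ℕ} (h th : S → Fin n → ℝ)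
    (hbddh : ∃ C, ∀ s i, |h s i| ≤ C) (hbddth : ∃ C, ∀ s i, |th s i| ≤ C)
    (hclose : (⨆ s, ⨆ i, |h s i - th s i|) ≤ 1 / 2)
    (θ0 : Fin n → ℝ)
    (hθ0h : ∀ s, 1 ≤ ∑ i, θ0 i * h s i) (hθ0th : ∀ s, 1 ≤ ∑ i, θ0 i * th s i)
    (hθ0n : (∑ i, |θ0 i|) ≤ 1)
    (β : ℝ) (θ : Fin n → ℝ)
    (hθfeas : ∀ s, 0 ≤ ∑ i, θ i * th s i) (hθn : (∑ i, |θ i|) ≤ β / 2) :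
    (∀ s, (0 ≤ ∑ i, θ i * th s i) ∧
        (∑ i, θ i * th s i) ≤
          ∑ i, (θ i + (∑ k, |θ k|) * (⨆ s', ⨆ i', |h s' i' - th s' i'|) * θ0 i) * h s i) ∧
      (∑ i, |θ i + (∑ k, |θ k|) * (⨆ s', ⨆ i', |h s' i' - th s' i'|) * θ0 i|) ≤ β := by
  obtain ⟨C1, hC1⟩ := hbddh
  obtain ⟨C2, hC2⟩ := hbddth
  set E := ⨆ s', ⨆ i', |h s' i' - th s' i'| with hE
  set T := ∑ k, |θ k| with hT
  have hT0 : 0 ≤ T := Finset.sum_nonneg fun i _ => abs_nonneg _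
  have hgle : ∀ s, (⨆ i, |h s i - th s i|) ≤ max (C1 + C2) 0 := by
    intro s
    rcases Nat.eq_zero_or_pos n with hn | hn
    · subst hn
      rw [iSup_of_empty', Real.sSup_empty]; positivity
    · haveI : Nonempty (Fin n) := ⟨⟨0, hn⟩⟩
      refine ciSup_le fun i => le_max_of_le_left ?_
      calc |h s i - th s i| ≤ |h s i| + |th s i| := abs_sub _ _
        _ ≤ C1 + C2 := add_le_add (hC1 s i) (hC2 s i)
  have hbddE : BddAbove (Set.range fun s => ⨆ i, |h s i - th s i|) :=
    ⟨max (C1 + C2) 0, by rintro x ⟨s, rfl⟩; exact hgle s⟩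
  have hE0 : 0 ≤ E := by
    rcases isEmpty_or_nonempty S with hS | hS
    · rw [hE, iSup_of_empty', Real.sSup_empty]
    · obtain ⟨s⟩ := hS
      have h1 : 0 ≤ ⨆ i, |h s i - th s i| := by
        rcases Nat.eq_zero_or_pos n with hn | hn
        · subst hn; rw [iSup_of_empty', Real.sSup_empty]
        · haveI : Nonempty (Fin n) := ⟨⟨0, hn⟩⟩
          exact le_ciSup_of_le (Set.Finite.bddAbove (Set.finite_range _)) ⟨0, hn⟩
            (abs_nonneg _)
      exact h1.trans (le_ciSup hbddE s)
  have hEle : ∀ s i, |h s i - th s i| ≤ E := fun s i =>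
    (le_ciSup (Set.Finite.bddAbove (Set.finite_range _)) i).trans (le_ciSup hbddE s)
  have hE12 : E ≤ 1 / 2 := hclose
  have ha0 : 0 ≤ T * E := mul_nonneg hT0 hE0
  constructor
  · intro s
    refine ⟨hθfeas s, ?_⟩
    have key : ∑ i, θ i * th s i - ∑ i, θ i * h s i ≤ T * E := by
      rw [← Finset.sum_sub_distrib]
      calc ∑ i, (θ i * th s i - θ i * h s i) ≤ ∑ i, |θ i| * E := by
            apply Finset.sum_le_sum
            intro i _
            rw [← mul_sub]
            calc θ i * (th s i - h s i) ≤ |θ i * (th s i - h s i)| := le_abs_self _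
              _ = |θ i| * |th s i - h s i| := abs_mul _ _
              _ ≤ |θ i| * E := by
                  apply mul_le_mul_of_nonneg_left _ (abs_nonneg _)
                  rw [abs_sub_comm]; exact hEle s i
        _ = T * E := by rw [← Finset.sum_mul]
    have h2 : T * E ≤ T * E * ∑ i, θ0 i * h s i := le_mul_of_one_le_right ha0 (hθ0h s)
    have expand : ∑ i, (θ i + T * E * θ0 i) * h s i
        = ∑ i, θ i * h s i + T * E * ∑ i, θ0 i * h s i := by
      rw [Finset.mul_sum, ← Finset.sum_add_distrib]
      congr 1; ext i; ring
    rw [expand]; linarith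
  · have step1 : ∀ i : Fin n, |θ i + T * E * θ0 i| ≤ |θ i| + T * E * |θ0 i| := by
      intro i
      have := abs_add_le (θ i) (T * E * θ0 i)
      rwa [abs_mul, abs_of_nonneg ha0] at this
    calc ∑ i, |θ i + T * E * θ0 i| ≤ ∑ i, (|θ i| + T * E * |θ0 i|) :=
        Finset.sum_le_sum fun i _ => step1 i
      _ = T + T * E * ∑ i, |θ0 i| := by rw [Finset.sum_add_distrib, ← Finset.mul_sum]
      _ ≤ T + T * E * 1 := by nlinarith
      _ ≤ β := by nlinarith
end

section
/- Under the setting of the previous feasibility-transfer lemma, with $\mu$ a probability measure on $S$ and $a = \|\theta\|_1 \cdot \sup_s\|h(s)-\tilde h(s)\|_\infty$ where $\|\theta\|_1 \le \beta/2$ and $\|\theta_0\|_1 \le 1$, the objective values satisfy $\int (\theta + a\theta_0)^\top h \, d\mu - \int \theta^\top \tilde h \, d\mu \le \frac{\beta}{2}\big(1 + \sup_s \|h(s)\|_\infty\big) \sup_s \|h(s)-\tilde h(s)\|_\infty$. -/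
open Finset MeasureTheory

/-- Objective value proximity under basis approximation (Part 2 of Lemma 3): for a
probability measure `μ` on `S`, with `a = ‖θ‖₁ · sup_s ‖h(s) - h̃(s)‖_∞`,
`∫ (θ + aθ₀)ᵀh dμ - ∫ θᵀh̃ dμ ≤ (β/2)(1 + sup_s ‖h(s)‖_∞) sup_s ‖h(s) - h̃(s)‖_∞`. -/
theorem stmt10 {S : Type*} [MeasurableSpace S] {n : ℕ} (μ : Measure S)
    [IsProbabilityMeasure μ] (h th : S → Fin n → ℝ)
    (hmeash : ∀ i, Measurable fun s => h s i) (hmeasth : ∀ i, Measurable fun s => th s i)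
    (hbddh : ∃ C, ∀ s i, |h s i| ≤ C) (hbddth : ∃ C, ∀ s i, |th s i| ≤ C)
    (hclose : (⨆ s, ⨆ i, |h s i - th s i|) ≤ 1 / 2)
    (θ0 : Fin n → ℝ)
    (hθ0h : ∀ s, 1 ≤ ∑ i, θ0 i * h s i) (hθ0th : ∀ s, 1 ≤ ∑ i, θ0 i * th s i)
    (hθ0n : (∑ i, |θ0 i|) ≤ 1)
    (β : ℝ) (θ : Fin n → ℝ)
    (hθfeas : ∀ s, 0 ≤ ∑ i, θ i * th s i) (hθn : (∑ i, |θ i|) ≤ β / 2) :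
    (∫ s, ∑ i, (θ i + (∑ k, |θ k|) * (⨆ s', ⨆ i', |h s' i' - th s' i'|) * θ0 i) * h s i ∂μ) -
        (∫ s, ∑ i, θ i * th s i ∂μ) ≤
      β / 2 * (1 + ⨆ s', ⨆ i', |h s' i'|) * (⨆ s', ⨆ i', |h s' i' - th s' i'|) := by
  obtain ⟨C1, hC1⟩ := hbddh
  obtain ⟨C2, hC2⟩ := hbddth
  set ε := ⨆ s', ⨆ i', |h s' i' - th s' i'| with hε
  set H := ⨆ s', ⨆ i', |h s' i'| with hH
  set T := ∑ k, |θ k| with hT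
  have hTnn : 0 ≤ T := Finset.sum_nonneg fun i _ => abs_nonneg _
  have hεnn : 0 ≤ ε := Real.iSup_nonneg fun s => Real.iSup_nonneg fun i => abs_nonneg _
  have hHnn : 0 ≤ H := Real.iSup_nonneg fun s => Real.iSup_nonneg fun i => abs_nonneg _
  -- pointwise bound by sup for |h - th|
  have hεbd : ∀ s i, |h s i - th s i| ≤ ε := by
    intro s i
    have h1 : |h s i - th s i| ≤ ⨆ i', |h s i' - th s i'| :=
      le_ciSup (f := fun i' => |h s i' - th s i'|) (Set.Finite.bddAbove (Set.finite_range _)) i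
    refine h1.trans (le_ciSup (f := fun s' => ⨆ i', |h s' i' - th s' i'|) ?_ s)
    refine ⟨max (C1 + C2) 0, ?_⟩
    rintro y ⟨s', rfl⟩
    refine Real.iSup_le (fun i' => ?_) (le_max_right _ _)
    calc |h s' i' - th s' i'| ≤ |h s' i'| + |th s' i'| := abs_sub _ _
      _ ≤ C1 + C2 := add_le_add (hC1 _ _) (hC2 _ _)
      _ ≤ max (C1 + C2) 0 := le_max_left _ _
  have hHbd : ∀ s i, |h s i| ≤ H := by
    intro s i
    have h1 : |h s i| ≤ ⨆ i', |h s i'| :=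
      le_ciSup (f := fun i' => |h s i'|) (Set.Finite.bddAbove (Set.finite_range _)) i
    refine h1.trans (le_ciSup (f := fun s' => ⨆ i', |h s' i'|) ?_ s)
    refine ⟨max C1 0, ?_⟩
    rintro y ⟨s', rfl⟩
    exact Real.iSup_le (fun i' => (hC1 _ _).trans (le_max_left _ _)) (le_max_right _ _)
  -- integrability
  have int1 : Integrable (fun s => ∑ i, (θ i + T * ε * θ0 i) * h s i) μ := by
    refine Integrable.mono' (g := fun _ => ∑ i, |θ i + T * ε * θ0 i| * C1)
      (integrable_const _) ?_ ?_
    · exact Measurable.aestronglyMeasurable (by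
        exact Finset.measurable_sum _ fun i _ => (hmeash i).const_mul _)
    · filter_upwards with s
      calc ‖∑ i, (θ i + T * ε * θ0 i) * h s i‖
          ≤ ∑ i, |(θ i + T * ε * θ0 i) * h s i| := Finset.abs_sum_le_sum_abs _ _
        _ ≤ ∑ i, |θ i + T * ε * θ0 i| * C1 := by
            refine Finset.sum_le_sum fun i _ => ?_
            rw [abs_mul]
            exact mul_le_mul_of_nonneg_left (hC1 _ _) (abs_nonneg _)
  have int2 : Integrable (fun s => ∑ i, θ i * th s i) μ := by
    refine Integrable.mono' (g := fun _ => ∑ i, |θ i| * C2)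
      (integrable_const _) ?_ ?_
    · exact Measurable.aestronglyMeasurable (by
        exact Finset.measurable_sum _ fun i _ => (hmeasth i).const_mul _)
    · filter_upwards with s
      calc ‖∑ i, θ i * th s i‖
          ≤ ∑ i, |θ i * th s i| := Finset.abs_sum_le_sum_abs _ _
        _ ≤ ∑ i, |θ i| * C2 := by
            refine Finset.sum_le_sum fun i _ => ?_
            rw [abs_mul]
            exact mul_le_mul_of_nonneg_left (hC2 _ _) (abs_nonneg _)
  rw [← integral_sub int1 int2]
  have key : ∀ s, (∑ i, (θ i + T * ε * θ0 i) * h s i) - (∑ i, θ i * th s i)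
      ≤ β / 2 * (1 + H) * ε := by
    intro s
    have expand : (∑ i, (θ i + T * ε * θ0 i) * h s i) - (∑ i, θ i * th s i)
        = (∑ i, θ i * (h s i - th s i)) + T * ε * (∑ i, θ0 i * h s i) := by
      rw [Finset.mul_sum, ← Finset.sum_add_distrib, ← Finset.sum_sub_distrib]
      congr 1; ext i; ring
    rw [expand]
    have b1 : (∑ i, θ i * (h s i - th s i)) ≤ T * ε := by
      calc (∑ i, θ i * (h s i - th s i)) ≤ ∑ i, |θ i * (h s i - th s i)| :=
            Finset.sum_le_sum fun i _ => le_abs_self _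
        _ ≤ ∑ i, |θ i| * ε := by
            refine Finset.sum_le_sum fun i _ => ?_
            rw [abs_mul]
            exact mul_le_mul_of_nonneg_left (hεbd s i) (abs_nonneg _)
        _ = T * ε := by rw [← Finset.sum_mul]
    have b2 : T * ε * (∑ i, θ0 i * h s i) ≤ T * ε * H := by
      refine mul_le_mul_of_nonneg_left ?_ (mul_nonneg hTnn hεnn)
      calc (∑ i, θ0 i * h s i) ≤ ∑ i, |θ0 i| * H := by
            refine Finset.sum_le_sum fun i _ => ?_
            calc θ0 i * h s i ≤ |θ0 i * h s i| := le_abs_self _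
              _ = |θ0 i| * |h s i| := abs_mul _ _
              _ ≤ |θ0 i| * H := mul_le_mul_of_nonneg_left (hHbd s i) (abs_nonneg _)
        _ = (∑ i, |θ0 i|) * H := by rw [← Finset.sum_mul]
        _ ≤ 1 * H := mul_le_mul_of_nonneg_right hθ0n hHnn
        _ = H := one_mul _
    calc (∑ i, θ i * (h s i - th s i)) + T * ε * (∑ i, θ0 i * h s i)
        ≤ T * ε + T * ε * H := add_le_add b1 b2
      _ = T * (1 + H) * ε := by ring
      _ ≤ β / 2 * (1 + H) * ε := by
          refine mul_le_mul_of_nonneg_right (mul_le_mul_of_nonneg_right hθn ?_) hεnn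
          linarith
  calc (∫ s, (∑ i, (θ i + T * ε * θ0 i) * h s i) - (∑ i, θ i * th s i) ∂μ)
      ≤ ∫ _, β / 2 * (1 + H) * ε ∂μ :=
        integral_mono (int1.sub int2) (integrable_const _) key
    _ = β / 2 * (1 + H) * ε := by simp
end
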